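/- Let M be a compact Riemannian manifold, γ : [0,1] → M a geodesic with no conjugate points, v ∈ T_{γ(1)}M, and let j_v be the Jacobi field along γ with j_v(0)=0, j_v(1)=v. Then there is a constant C depending only on an upper bound for |γ'| and the curvature bounds of M such that ‖D_{γ'} (j_v(u)/u)‖ ≤ C ‖j_v'(0)‖ |γ'|² for u ∈ (0,1], where j_v(u)/u extends continuously to u=0 with value j_v'(0). -/

import Mathlib

open Set
open scoped ContDiff

/-- A Jacobi field along a geodesic of speed `s`, written in a parallel orthonormal
trivialization of the tangent bundle along the geodesic: the Jacobi equation
`j'' + R(j, γ')γ' = 0` becomes `j'' = - R(t) j`, with `‖R(t)‖ ≤ K s²` when the sectional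
curvatures of `M` are bounded by `K`. -/
def IsJacobiField' {V : Type*} [NormedAddCommGroup V] [NormedSpace ℝ V]
    (R : ℝ → V →L[ℝ] V) (j : ℝ → V) : Prop :=
  ContDiff ℝ (⊤ : ℕ∞) j ∧ ∀ t : ℝ, deriv (deriv j) t = - R t (j t)

private theorem stmt12_aux (K s : ℝ) (hK : 0 ≤ K) (hs : 0 ≤ s)
    {V : Type} [NormedAddCommGroup V] [InnerProductSpace ℝ V]
    (R : ℝ → V →L[ℝ] V) (j : ℝ → V)
    (hRcont : Continuous R)
    (hRb : ∀ t ∈ Icc (0:ℝ) 1, ‖R t‖ ≤ K * s ^ 2)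
    (hjsmooth : ContDiff ℝ (⊤ : ℕ∞) j)
    (hjeq : ∀ t : ℝ, deriv (deriv j) t = - R t (j t))
    (hj0 : j 0 = 0)
    (u : ℝ) (hu0 : 0 < u) (hu1 : u ≤ 1) :
    ‖deriv (fun w : ℝ => w⁻¹ • j w) u‖ ≤
      ((K / 2 + 1) * Real.exp (max 1 (K * s ^ 2))) * ‖deriv j 0‖ * s ^ 2 := by
  set L : ℝ := max 1 (K * s ^ 2) with hLdef
  have hKs : K * s ^ 2 ≤ L := le_max_right _ _
  have h1L : (1:ℝ) ≤ L := le_max_left _ _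
  have hL0 : (0:ℝ) ≤ L := zero_le_one.trans h1L
  have hjsm : ContDiff ℝ (∞ : WithTop ℕ∞) j := hjsmooth.of_le (by simp)
  have hdj : Differentiable ℝ j := hjsm.differentiable (by norm_num)
  have hdj2 : ContDiff ℝ (∞ : WithTop ℕ∞) (deriv j) := (contDiff_infty_iff_deriv.mp hjsm).2
  have hddj : Differentiable ℝ (deriv j) := hdj2.differentiable (by norm_num)
  have hcj2 : Continuous (deriv (deriv j)) := (contDiff_infty_iff_deriv.mp hdj2).2.continuous
  set δ := ‖deriv j 0‖ with hδ
  have hδ0 : 0 ≤ δ := norm_nonneg _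
  -- Gronwall bound for ‖j t‖ on [0,1]
  have hjb : ∀ t ∈ Icc (0:ℝ) 1, ‖j t‖ ≤ δ * Real.exp L := by
    set f : ℝ → V × V := fun t => (j t, deriv j t) with hf
    have hfd : ∀ t : ℝ, HasDerivAt f (deriv j t, deriv (deriv j) t) t := fun t =>
      ((hdj t).hasDerivAt).prodMk ((hddj t).hasDerivAt)
    have key := norm_le_gronwallBound_of_norm_deriv_right_le (a := 0) (b := 1)
      (f := f) (f' := fun t => (deriv j t, deriv (deriv j) t)) (δ := δ) (K := L) (ε := 0)
      ((hdj.continuous.prodMk hddj.continuous).continuousOn)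
      (fun x _ => (hfd x).hasDerivWithinAt)
      (by simp [hf, Prod.norm_def, hj0, hδ])
      ?_
    · intro t ht
      have h1 : ‖j t‖ ≤ ‖f t‖ := norm_fst_le (f t)
      have h2 := key t ht
      rw [gronwallBound_ε0] at h2
      calc ‖j t‖ ≤ δ * Real.exp (L * (t - 0)) := h1.trans h2
        _ ≤ δ * Real.exp L := by
            apply mul_le_mul_of_nonneg_left _ hδ0
            apply Real.exp_le_exp.mpr
            nlinarith [ht.1, ht.2]
    · intro x hx
      have hfx : (0:ℝ) ≤ ‖f x‖ := norm_nonneg _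
      have h1 : ‖deriv j x‖ ≤ ‖f x‖ := norm_snd_le (f x)
      have h2 : ‖deriv (deriv j) x‖ ≤ L * ‖f x‖ := by
        rw [hjeq, norm_neg]
        calc ‖R x (j x)‖ ≤ ‖R x‖ * ‖j x‖ := (R x).le_opNorm _
          _ ≤ (K * s ^ 2) * ‖f x‖ := by
              apply mul_le_mul (hRb x ⟨hx.1, hx.2.le⟩) (norm_fst_le (f x)) (norm_nonneg _)
              positivity
          _ ≤ L * ‖f x‖ := mul_le_mul_of_nonneg_right hKs hfx
      rw [Prod.norm_def]
      simp only [add_zero]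
      exact max_le (h1.trans (le_mul_of_one_le_left hfx h1L)) h2
  -- integral identity for F u = u • j' u - j u
  set F : ℝ → V := fun t => t • deriv j t - j t with hF
  have hF' : ∀ t : ℝ, HasDerivAt F (t • deriv (deriv j) t) t := by
    intro t
    have h1 : HasDerivAt (fun w : ℝ => w • deriv j w)
        (t • deriv (deriv j) t + (1:ℝ) • deriv j t) t :=
      (hasDerivAt_id t).smul ((hddj t).hasDerivAt)
    have h2 := h1.sub (hdj t).hasDerivAt
    simp at h2; exact h2
  set M : ℝ := K * s ^ 2 * (δ * Real.exp L) with hM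
  have hM0 : 0 ≤ M := by positivity
  have hFb : ‖F u‖ ≤ M * (u ^ 2 / 2) := by
    have hB : ∀ x : ℝ, HasDerivAt (fun t : ℝ => M * (t ^ 2 / 2)) (M * x) x := by
      intro x
      have := (hasDerivAt_pow 2 x).const_mul (M / 2)
      convert this.congr_deriv ?_ using 1
      · rfl
      · rfl
      · ext t; ring
      · simp; ring
    have key := image_norm_le_of_norm_deriv_right_le_deriv_boundary
      (f := F) (f' := fun t => t • deriv (deriv j) t) (a := 0) (b := u)
      (B := fun t => M * (t ^ 2 / 2)) (B' := fun t => M * t)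
      (fun t _ => (hF' t).continuousAt.continuousWithinAt)
      (fun t _ => (hF' t).hasDerivWithinAt)
      (by simp [hF, hj0]) hB ?_
    · simpa using key ⟨hu0.le, le_refl u⟩
    · intro x hx
      have hx0 : 0 ≤ x := hx.1
      have hx1 : x ≤ 1 := hx.2.le.trans hu1
      rw [norm_smul, Real.norm_eq_abs, abs_of_nonneg hx0, hjeq, norm_neg]
      have hRj : ‖R x (j x)‖ ≤ M := by
        rw [hM]
        calc ‖R x (j x)‖ ≤ ‖R x‖ * ‖j x‖ := (R x).le_opNorm _
          _ ≤ K * s ^ 2 * (δ * Real.exp L) :=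
              mul_le_mul (hRb x ⟨hx0, hx1⟩) (hjb x ⟨hx0, hx1⟩) (norm_nonneg _) (by positivity)
      calc x * ‖R x (j x)‖ ≤ x * M := mul_le_mul_of_nonneg_left hRj hx0
        _ = M * x := mul_comm _ _
  -- derivative of W
  have hu' : u ≠ 0 := hu0.ne'
  have hW : HasDerivAt (fun w : ℝ => w⁻¹ • j w)
      (u⁻¹ • deriv j u + (-(u ^ 2)⁻¹) • j u) u :=
    (hasDerivAt_inv hu').smul (hdj u).hasDerivAt
  have hWval : u⁻¹ • deriv j u + (-(u ^ 2)⁻¹) • j u = (u ^ 2)⁻¹ • F u := by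
    rw [hF]
    rw [smul_sub, smul_smul]
    have : (u ^ 2)⁻¹ * u = u⁻¹ := by field_simp [pow_two]
    rw [this, neg_smul, sub_eq_add_neg]
  rw [hW.deriv, hWval]
  rw [norm_smul, Real.norm_eq_abs, abs_of_pos (by positivity : (0:ℝ) < (u ^ 2)⁻¹)]
  calc (u ^ 2)⁻¹ * ‖F u‖ ≤ (u ^ 2)⁻¹ * (M * (u ^ 2 / 2)) := by
        exact mul_le_mul_of_nonneg_left hFb (by positivity)
    _ = M / 2 := by field_simp
    _ ≤ (K / 2 + 1) * Real.exp L * δ * s ^ 2 := by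
        rw [hM]
        have he : 0 ≤ Real.exp L := Real.exp_pos L |>.le
        nlinarith [mul_nonneg (mul_nonneg hδ0 he) (sq_nonneg s)]


/-- equation (5.15) of the paper: for a geodesic `γ : [0,1] → M` of speed
`s` in a compact Riemannian manifold with curvature bound `K`, without conjugate points,
and a Jacobi field `j` along `γ` with `j(0) = 0`, the rescaled Jacobi field
`W(u) = j(u)/u` (extended continuously by `W(0) = j'(0)`) satisfies
`‖D_{γ'} W(u)‖ ≤ C ‖j'(0)‖ s²` for `u ∈ (0,1]`, where `C` depends only on the speed bound
and the curvature bound.  In a parallel trivialization of the tangent bundle along `γ`,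
`D_{γ'}` becomes the ordinary derivative in `u`. -/
theorem stmt12 (K s : ℝ) (hK : 0 ≤ K) (hs : 0 ≤ s) :
    ∃ C : ℝ, 0 < C ∧
      ∀ {V : Type} (_ : NormedAddCommGroup V), ∀ (_ : @InnerProductSpace ℝ V _ _),
      ∀ (R : ℝ → V →L[ℝ] V) (j : ℝ → V),
        Continuous R →
        (∀ t ∈ Icc (0:ℝ) 1, ‖R t‖ ≤ K * s ^ 2) →
        IsJacobiField' R j →
        j 0 = 0 →
        (∀ j' : ℝ → V, IsJacobiField' R j' → j' 0 = 0 → j' 1 = 0 → j' = 0) →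
        ∀ u ∈ Ioc (0:ℝ) 1,
          ‖deriv (fun w : ℝ => w⁻¹ • j w) u‖ ≤ C * ‖deriv j 0‖ * s ^ 2 := by
  refine ⟨(K / 2 + 1) * Real.exp (max 1 (K * s ^ 2)), by positivity, ?_⟩
  intro V iV iIP R j hRc hRb hj hj0 _hnc u hu
  letI := iV
  letI := iIP
  exact stmt12_aux K s hK hs R j hRc hRb hj.1 hj.2 hj0 u hu.1 hu.2
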